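/- Let H ∈ (1/2, 1), T > 0, K ≥ 0, α ∈ (H − 1/2, 1], and let f : [0, T] → ℝ be bounded and satisfy |f(t) − f(s)| ≤ K·|t − s|^{α} for all s, t ∈ [0, T]. For u ∈ (0, T] define G(u) = u^{1/2−H}·f(u) + (H − 1/2)·u^{H−1/2}·∫_0^u (u^{1/2−H}·f(u) − s^{1/2−H}·f(s))·(u−s)^{−(H+1/2)} ds. Then for every u ∈ (0, T] the function s ↦ (u^{1/2−H}·f(u) − s^{1/2−H}·f(s))·(u−s)^{−(H+1/2)} is Lebesgue integrable on (0, u), and G is square integrable on (0, T): ∫_0^T G(u)² du < ∞. -/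

import Mathlib

/-!
Write `p = 1/2 - H ∈ (-1/2, 0)`. Splitting `u^p f u - s^p f s = u^p (f u - f s) + (u^p - s^p) f s`,
the Hölder bound controls the first part of the integrand by `K u^p (u-s)^(α+p-1)`, integrable
since `α + p > 0`. For the second part, `s^p - u^p ≤ s^p (u-s)/u` turns the singular factor
`(u-s)^(p-1)` into `s^p (u-s)^p / u`, and `s^p (u-s)^p ≤ (u/2)^p (s^p + (u-s)^p)` separates the
two endpoint singularities. Integrating, `|∫_0^u …| ≤ C u^(2p)`, hence `|G u| ≤ C' u^p`, which
is square integrable on `(0, T)` because `2p > -1`.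
-/

open MeasureTheory Set

lemma continuousOn_of_abs_sub_le_mul_rpow {f : ℝ → ℝ} {S : Set ℝ} {K α : ℝ} (hα : 0 < α)
    (hf : ∀ x ∈ S, ∀ y ∈ S, |f y - f x| ≤ K * |y - x| ^ α) : ContinuousOn f S := by
  intro x hx
  rw [ContinuousWithinAt, tendsto_iff_norm_sub_tendsto_zero]
  refine squeeze_zero' (Filter.Eventually.of_forall fun _ => norm_nonneg _)
    (eventually_nhdsWithin_of_forall fun y hy => hf x hx y hy) ?_
  have hcont : Continuous fun y : ℝ => K * |y - x| ^ α := by fun_prop (disch := exact hα.le)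
  simpa [Real.zero_rpow hα.ne'] using (hcont.tendsto x).mono_left nhdsWithin_le_nhds

namespace Real

lemma rpow_sub_rpow_le_of_neg_one_le {p s u : ℝ} (hp : -1 ≤ p) (hs : 0 < s) (hsu : s ≤ u) :
    s ^ p - u ^ p ≤ s ^ p * (u - s) / u := by
  have hu : 0 < u := hs.trans_le hsu
  have hratio : s / u ≤ (u / s) ^ p :=
    calc s / u = (u / s) ^ (-1 : ℝ) := by rw [rpow_neg_one, inv_div]
      _ ≤ (u / s) ^ p := rpow_le_rpow_of_exponent_le ((one_le_div hs).2 hsu) hp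
  have hup : u ^ p = s ^ p * (u / s) ^ p := by
    rw [div_rpow hu.le hs.le, mul_div_cancel₀ _ (rpow_pos_of_pos hs p).ne']
  have hsp : 0 ≤ s ^ p := rpow_nonneg hs.le p
  calc s ^ p - u ^ p = s ^ p * (1 - (u / s) ^ p) := by rw [hup]; ring
    _ ≤ s ^ p * (1 - s / u) := by gcongr
    _ = s ^ p * (u - s) / u := by field_simp

lemma rpow_mul_rpow_le_of_nonpos {p a b : ℝ} (hp : p ≤ 0) (ha : 0 < a) (hb : 0 < b) :
    a ^ p * b ^ p ≤ ((a + b) / 2) ^ p * (a ^ p + b ^ p) := by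
  wlog hab : a ≤ b generalizing a b
  · have := this hb ha (le_of_not_ge hab)
    rwa [add_comm b, add_comm (b ^ p), mul_comm (b ^ p)] at this
  have hbp : b ^ p ≤ ((a + b) / 2) ^ p := rpow_le_rpow_of_nonpos (by positivity) (by linarith) hp
  have hap : 0 ≤ a ^ p := rpow_nonneg ha.le p
  have hbp0 : 0 ≤ b ^ p := rpow_nonneg hb.le p
  nlinarith

end Real

lemma integral_Ioo_rpow {u r : ℝ} (hu : 0 < u) (hr : -1 < r) :
    ∫ s in Ioo 0 u, s ^ r = u ^ (r + 1) / (r + 1) := by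
  rw [← integral_Ioc_eq_integral_Ioo, ← intervalIntegral.integral_of_le hu.le,
    integral_rpow (Or.inl hr), Real.zero_rpow (by linarith), sub_zero]

lemma integrableOn_Ioo_rpow_sub {u r : ℝ} (hu : 0 < u) (hr : -1 < r) :
    IntegrableOn (fun s => (u - s) ^ r) (Ioo 0 u) := by
  rw [← intervalIntegrable_iff_integrableOn_Ioo_of_le hu.le]
  simpa using
    ((intervalIntegral.intervalIntegrable_rpow' (a := 0) (b := u) hr).comp_sub_left u).symm

lemma integral_Ioo_rpow_sub {u r : ℝ} (hu : 0 < u) (hr : -1 < r) :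
    ∫ s in Ioo 0 u, (u - s) ^ r = u ^ (r + 1) / (r + 1) := by
  rw [← integral_Ioc_eq_integral_Ioo, ← intervalIntegral.integral_of_le hu.le,
    intervalIntegral.integral_comp_sub_left (fun s => s ^ r), sub_self, sub_zero,
    intervalIntegral.integral_of_le hu.le, integral_Ioc_eq_integral_Ioo, integral_Ioo_rpow hu hr]

/-- With `p = 1/2 - H`, the integrand of the Marchaud form of the fractional derivative of order
`-p` of `s ↦ s ^ p * f s`. -/
noncomputable def marchaudIntegrand (f : ℝ → ℝ) (p u s : ℝ) : ℝ :=
  (u ^ p * f u - s ^ p * f s) * (u - s) ^ (p - 1)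

noncomputable def marchaudMajorant (K M α p u s : ℝ) : ℝ :=
  K * u ^ p * (u - s) ^ (α + p - 1) + M * ((u / 2) ^ p / u) * (s ^ p + (u - s) ^ p)

section
variable {p α K M u : ℝ}

lemma abs_rpow_mul_sub_rpow_mul_le {s x y : ℝ} (hp : -1 ≤ p) (hp0 : p ≤ 0) (hs : 0 < s)
    (hsu : s < u) (hxy : |x - y| ≤ K * (u - s) ^ α) (hy : |y| ≤ M) :
    |(u ^ p * x - s ^ p * y) * (u - s) ^ (p - 1)| ≤ marchaudMajorant K M α p u s := by
  have hu : 0 < u := hs.trans hsu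
  have hus : 0 < u - s := sub_pos.2 hsu
  have hM : 0 ≤ M := (abs_nonneg y).trans hy
  have hup : 0 ≤ u ^ p := Real.rpow_nonneg hu.le p
  have hmono : u ^ p ≤ s ^ p := Real.rpow_le_rpow_of_nonpos hs hsu.le hp0
  have hdiff : |u ^ p * x - s ^ p * y| ≤ u ^ p * (K * (u - s) ^ α) + (s ^ p - u ^ p) * M :=
    calc |u ^ p * x - s ^ p * y| = |u ^ p * (x - y) - (s ^ p - u ^ p) * y| := by ring_nf
      _ ≤ u ^ p * |x - y| + (s ^ p - u ^ p) * |y| := by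
        refine (abs_sub _ _).trans_eq ?_
        rw [abs_mul, abs_mul, abs_of_nonneg hup, abs_of_nonneg (sub_nonneg.2 hmono)]
      _ ≤ u ^ p * (K * (u - s) ^ α) + (s ^ p - u ^ p) * M := by gcongr
  have hsplit : (u - s) * (u - s) ^ (p - 1) = (u - s) ^ p := by
    simpa only [Real.rpow_one, add_sub_cancel] using (Real.rpow_add hus 1 (p - 1)).symm
  calc |(u ^ p * x - s ^ p * y) * (u - s) ^ (p - 1)|
      ≤ (u ^ p * (K * (u - s) ^ α) + (s ^ p - u ^ p) * M) * (u - s) ^ (p - 1) := by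
        rw [abs_mul, abs_of_nonneg (Real.rpow_nonneg hus.le _)]
        gcongr
    _ = K * u ^ p * ((u - s) ^ α * (u - s) ^ (p - 1)) +
          M * ((s ^ p - u ^ p) * (u - s) ^ (p - 1)) := by ring
    _ ≤ K * u ^ p * ((u - s) ^ α * (u - s) ^ (p - 1)) +
          M * (s ^ p * (u - s) / u * (u - s) ^ (p - 1)) := by
        gcongr
        exact Real.rpow_sub_rpow_le_of_neg_one_le hp hs hsu.le
    _ = K * u ^ p * (u - s) ^ (α + p - 1) + M * (s ^ p * (u - s) ^ p) / u := by
        rw [← Real.rpow_add hus, ← hsplit, add_sub_assoc]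
        ring
    _ ≤ K * u ^ p * (u - s) ^ (α + p - 1) + M * ((u / 2) ^ p * (s ^ p + (u - s) ^ p)) / u := by
        gcongr _ + M * ?_ / u
        simpa only [add_sub_cancel] using Real.rpow_mul_rpow_le_of_nonpos hp0 hs hus
    _ = marchaudMajorant K M α p u s := by rw [marchaudMajorant]; ring

lemma integrableOn_marchaudMajorant_and_integral_eq (hp : -1 < p) (hαp : 0 < α + p)
    (hu : 0 < u) :
    IntegrableOn (marchaudMajorant K M α p u) (Ioo 0 u) ∧
      ∫ s in Ioo 0 u, marchaudMajorant K M α p u s =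
        K / (α + p) * u ^ (α + 2 * p) + 2 ^ (1 - p) * M / (p + 1) * u ^ (2 * p) := by
  have h1 := (integrableOn_Ioo_rpow_sub hu (by linarith : -1 < α + p - 1)).const_mul (K * u ^ p)
  have h2 : IntegrableOn (fun s => s ^ p) (Ioo 0 u) :=
    (intervalIntegral.integrableOn_Ioo_rpow_iff hu).2 hp
  have h3 := integrableOn_Ioo_rpow_sub hu hp
  have h23 : IntegrableOn (fun s => M * ((u / 2) ^ p / u) * (s ^ p + (u - s) ^ p)) (Ioo 0 u) :=
    (h2.add h3).const_mul _
  refine ⟨h1.add h23, ?_⟩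
  simp only [marchaudMajorant]
  rw [integral_add h1 h23, integral_const_mul, integral_const_mul, integral_add h2 h3,
    integral_Ioo_rpow_sub hu (by linarith), integral_Ioo_rpow hu hp, integral_Ioo_rpow_sub hu hp,
    sub_add_cancel, Real.div_rpow hu.le zero_le_two, show α + 2 * p = p + (α + p) by ring,
    two_mul, Real.rpow_add hu p (α + p), Real.rpow_add hu p p, Real.rpow_add_one hu.ne',
    Real.rpow_sub zero_lt_two, Real.rpow_one]
  have := Real.rpow_pos_of_pos zero_lt_two p
  have : 0 < p + 1 := by linarith
  field_simp
  ring

end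

section
variable {f : ℝ → ℝ} {p α K M T u : ℝ}

lemma continuousOn_marchaudIntegrand (hcont : ContinuousOn f (Icc 0 T)) (huT : u ≤ T) :
    ContinuousOn (marchaudIntegrand f p u) (Ioo 0 u) := by
  exact (continuousOn_const.sub ((continuousOn_id.rpow_const fun s hs => Or.inl hs.1.ne').mul
    (hcont.mono fun s hs => ⟨hs.1.le, hs.2.le.trans huT⟩))).mul
    ((continuousOn_const.sub continuousOn_id).rpow_const fun s hs => Or.inl (sub_pos.2 hs.2).ne')

lemma integrableOn_marchaudIntegrand_and_abs_integral_le (hp : -1 < p) (hp0 : p ≤ 0)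
    (hαp : 0 < α + p) (hK : 0 ≤ K) (hu : 0 < u) (huT : u ≤ T) (hcont : ContinuousOn f (Icc 0 T))
    (hbd : ∀ t ∈ Icc 0 T, |f t| ≤ M)
    (hf : ∀ s ∈ Icc 0 T, ∀ t ∈ Icc 0 T, |f t - f s| ≤ K * |t - s| ^ α) :
    IntegrableOn (marchaudIntegrand f p u) (Ioo 0 u) ∧
      |∫ s in Ioo 0 u, marchaudIntegrand f p u s| ≤
        (K * T ^ α / (α + p) + 2 ^ (1 - p) * M / (p + 1)) * u ^ (2 * p) := by
  obtain ⟨hmaj, hmaj_eq⟩ :=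
    integrableOn_marchaudMajorant_and_integral_eq (K := K) (M := M) hp hαp hu
  have hdom : ∀ᵐ s ∂volume.restrict (Ioo 0 u),
      ‖marchaudIntegrand f p u s‖ ≤ marchaudMajorant K M α p u s := by
    refine (ae_restrict_iff' measurableSet_Ioo).2 (Filter.Eventually.of_forall fun s hs => ?_)
    have hsT : s ∈ Icc 0 T := ⟨hs.1.le, hs.2.le.trans huT⟩
    refine abs_rpow_mul_sub_rpow_mul_le hp.le hp0 hs.1 hs.2 ?_ (hbd s hsT)
    simpa [abs_of_pos (sub_pos.2 hs.2)] using hf s hsT u ⟨hu.le, huT⟩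
  refine ⟨hmaj.mono' ((continuousOn_marchaudIntegrand hcont huT).aestronglyMeasurable
    measurableSet_Ioo) hdom, ?_⟩
  have hα : 0 ≤ α := by linarith
  calc |∫ s in Ioo 0 u, marchaudIntegrand f p u s|
      ≤ K / (α + p) * u ^ (α + 2 * p) + 2 ^ (1 - p) * M / (p + 1) * u ^ (2 * p) :=
        hmaj_eq ▸ norm_integral_le_of_norm_le hmaj hdom
    _ ≤ K / (α + p) * (T ^ α * u ^ (2 * p)) + 2 ^ (1 - p) * M / (p + 1) * u ^ (2 * p) := by
        rw [Real.rpow_add hu]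
        gcongr
    _ = _ := by ring

end

lemma abs_rpow_mul_add_neg_mul_rpow_neg_mul_le {p u a I M C : ℝ} (hp0 : p ≤ 0) (hu : 0 < u)
    (ha : |a| ≤ M) (hI : |I| ≤ C * u ^ (2 * p)) :
    |u ^ p * a + -p * u ^ (-p) * I| ≤ (M + -p * C) * u ^ p := by
  have hup := Real.rpow_pos_of_pos hu p
  have hnp : 0 ≤ -p := neg_nonneg.2 hp0
  calc |u ^ p * a + -p * u ^ (-p) * I| ≤ u ^ p * |a| + -p * u ^ (-p) * |I| := by
        refine (abs_add_le _ _).trans_eq ?_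
        rw [abs_mul, abs_mul, abs_mul, abs_of_pos hup, abs_of_nonneg hnp,
          abs_of_pos (Real.rpow_pos_of_pos hu _)]
    _ ≤ u ^ p * M + -p * u ^ (-p) * (C * u ^ (2 * p)) := by gcongr
    _ = (M + -p * C) * u ^ p := by
        rw [two_mul, Real.rpow_add hu, Real.rpow_neg hu.le]
        field_simp

lemma lintegral_ofReal_sq_lt_top_of_abs_le_mul_rpow {G : ℝ → ℝ} {C p T : ℝ} (hp : -1 / 2 < p)
    (hT : 0 < T) (hG : ∀ u ∈ Ioo 0 T, |G u| ≤ C * u ^ p) :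
    ∫⁻ u in Ioo 0 T, ENNReal.ofReal (G u ^ 2) < ⊤ := by
  have hint : IntegrableOn (fun u => C ^ 2 * u ^ (p * 2)) (Ioo 0 T) :=
    ((intervalIntegral.integrableOn_Ioo_rpow_iff hT).2 (by linarith)).const_mul _
  refine lt_of_le_of_lt (setLIntegral_mono' measurableSet_Ioo fun u hu =>
    ENNReal.ofReal_le_ofReal ?_) hint.lintegral_lt_top
  calc G u ^ 2 = |G u| ^ 2 := (sq_abs _).symm
    _ ≤ (C * u ^ p) ^ 2 := pow_le_pow_left₀ (abs_nonneg _) (hG u hu) 2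
    _ = C ^ 2 * u ^ (p * 2) := by
        rw [mul_pow, ← Real.rpow_mul_natCast hu.1.le]
        norm_num

/-- For a bounded, `α`-Hölder continuous `f` on `[0,T]` with `α ∈ (H-1/2, 1]`, the weighted
Riemann–Liouville fractional derivative
`G(u) = u^{1/2-H} f(u) + (H-1/2) u^{H-1/2} ∫_0^u (u^{1/2-H}f(u) - s^{1/2-H}f(s))(u-s)^{-(H+1/2)} ds`
has a well-defined (integrable) inner integrand for every `u ∈ (0,T]`, and `∫_0^T G(u)² du < ∞`. -/
theorem stmt_8 (H T K Mf α : ℝ) (hH : H ∈ Set.Ioo (1/2 : ℝ) 1) (hT : 0 < T) (hK : 0 ≤ K)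
    (hα : α ∈ Set.Ioc (H - 1/2) 1)
    (f : ℝ → ℝ) (hbd : ∀ t ∈ Set.Icc (0:ℝ) T, |f t| ≤ Mf)
    (hf : ∀ s ∈ Set.Icc (0:ℝ) T, ∀ t ∈ Set.Icc (0:ℝ) T, |f t - f s| ≤ K * |t - s| ^ α)
    (G : ℝ → ℝ)
    (hG : ∀ u ∈ Set.Ioc (0:ℝ) T,
      G u = u ^ (1/2 - H) * f u + (H - 1/2) * u ^ (H - 1/2) *
        ∫ s in Set.Ioo (0:ℝ) u,
          (u ^ (1/2 - H) * f u - s ^ (1/2 - H) * f s) * (u - s) ^ (-(H + 1/2))) :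
    (∀ u ∈ Set.Ioc (0:ℝ) T,
      IntegrableOn
        (fun s : ℝ => (u ^ (1/2 - H) * f u - s ^ (1/2 - H) * f s) * (u - s) ^ (-(H + 1/2)))
        (Set.Ioo 0 u)) ∧
    (∫⁻ u in Set.Ioo (0:ℝ) T, ENNReal.ofReal ((G u) ^ 2)) < ⊤ := by
  obtain ⟨hH1, hH2⟩ := hH
  have hexp : -(H + 1/2) = 1/2 - H - 1 := by ring
  have hcont : ContinuousOn f (Icc 0 T) :=
    continuousOn_of_abs_sub_le_mul_rpow (by linarith [hα.1]) hf
  have hmarchaud := fun u (hu : u ∈ Ioc 0 T) =>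
    integrableOn_marchaudIntegrand_and_abs_integral_le (p := 1/2 - H) (by linarith) (by linarith)
      (by linarith [hα.1]) hK hu.1 hu.2 hcont hbd hf
  refine ⟨fun u hu => by rw [hexp]; exact (hmarchaud u hu).1, ?_⟩
  exact lintegral_ofReal_sq_lt_top_of_abs_le_mul_rpow (p := 1/2 - H) (by linarith) hT
    fun u hu => by
      rw [hG u ⟨hu.1, hu.2.le⟩, hexp, show H - 1/2 = -(1/2 - H) by ring]
      exact abs_rpow_mul_add_neg_mul_rpow_neg_mul_le (by linarith) hu.1 (hbd u ⟨hu.1.le, hu.2.le⟩)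
        (hmarchaud u ⟨hu.1, hu.2.le⟩).2
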